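/- arXiv:2406.12994 — 5 statements merged into one kernel-verified Lean document; each statement's English description precedes it below -/
import Mathlib

section
/- Let T ∈ B(H). Suppose that for every non-zero x ∈ H there exists a conjugation C on H such that Cx = x and C(TT*)C = T*T. Then T is normal. -/
open scoped ComplexInnerProductSpace

/-- A conjugation on a complex Hilbert space: a conjugate-linear involutive isometry. -/
def IsConjugation {H : Type*} [NormedAddCommGroup H] [InnerProductSpace ℂ H]
    (C : H → H) : Prop :=
  (∀ x y : H, C (x + y) = C x + C y) ∧
  (∀ (a : ℂ) (x : H), C (a • x) = (starRingEnd ℂ) a • C x) ∧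
  (∀ x : H, C (C x) = x) ∧
  (∀ h k : H, ⟪C h, C k⟫ = ⟪k, h⟫)

/-
For a non-zero `x`, take a conjugation `C` fixing `x`. Since `C` turns `⟪u, v⟫` into `⟪v, u⟫`,
the relation `C(TT*x) = T*Tx` gives `⟪T*Tx, x⟫ = ⟪x, TT*x⟫ = ⟪TT*x, x⟫`, the last step because
`TT*` is self-adjoint. So `T*T` and `TT*` have the same quadratic form, and over `ℂ` an operator is
determined by its quadratic form.
-/

section

variable {H : Type*} [NormedAddCommGroup H] [InnerProductSpace ℂ H]

theorem IsConjugation.inner_map_map {C : H → H} (hC : IsConjugation C) (h k : H) :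
    ⟪C h, C k⟫ = ⟪k, h⟫ :=
  hC.2.2.2 h k

theorem IsConjugation.inner_apply_self_eq [CompleteSpace H] {C : H → H} (hC : IsConjugation C)
    {A B : H →L[ℂ] H} (hA : IsSelfAdjoint A) {x : H} (hx : C x = x) (hAB : C (A x) = B x) :
    ⟪B x, x⟫ = ⟪A x, x⟫ :=
  calc ⟪B x, x⟫ = ⟪C (A x), C x⟫ := by rw [hAB, hx]
    _ = ⟪x, A x⟫ := hC.inner_map_map _ _
    _ = ⟪A x, x⟫ := (hA.isSymmetric x x).symm

end

/-- If for every non-zero `x` there is a conjugation `C` with `Cx = x` and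
`C(TT*)C = T*T`, then `T` is normal. -/
theorem normal_of_cNormal_fixing_every_vector {H : Type*} [NormedAddCommGroup H]
    [InnerProductSpace ℂ H] [CompleteSpace H] (T : H →L[ℂ] H)
    (h : ∀ x : H, x ≠ 0 → ∃ C : H → H, IsConjugation C ∧ C x = x ∧
      ∀ k : H, C (T (ContinuousLinearMap.adjoint T (C k))) =
        ContinuousLinearMap.adjoint T (T k)) :
    ContinuousLinearMap.adjoint T ∘L T = T ∘L ContinuousLinearMap.adjoint T := by
  refine ContinuousLinearMap.coe_injective ((ext_inner_map _ _).mp fun x => ?_)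
  rcases eq_or_ne x 0 with rfl | hx
  · simp
  obtain ⟨C, hC, hCx, hCnormal⟩ := h x hx
  have hTT : IsSelfAdjoint (T ∘L ContinuousLinearMap.adjoint T) :=
    IsSelfAdjoint.mul_star_self T
  have hCx_normal :
      C ((T ∘L ContinuousLinearMap.adjoint T) x) = (ContinuousLinearMap.adjoint T ∘L T) x := by
    simpa only [hCx, ContinuousLinearMap.comp_apply] using hCnormal x
  exact hC.inner_apply_self_eq hTT hCx hCx_normal
end

section
/- Let U ∈ B(H) be unitary and J a conjugation on H. Then U = JC for some conjugation C on H if and only if JUJ = U*. -/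
open scoped ComplexInnerProductSpace

/-!
If `U = JC`, then `JC` and `CJ` are adjoint to each other (each conjugation swaps the
arguments of the inner product once), so `U* = CJ = J(JC)J = JUJ`. Conversely, if
`JUJ = U*`, then `C := JU` is conjugate-linear and isometric, and `C² = JUJU = U*U = I`.
-/

namespace IsConjugation

variable {H : Type*} [NormedAddCommGroup H] [InnerProductSpace ℂ H] {C J : H → H}

lemma apply_apply (hC : IsConjugation C) (x : H) : C (C x) = x := hC.2.2.1 x

lemma inner_map_map_s4 (hC : IsConjugation C) (h k : H) : ⟪C h, C k⟫ = ⟪k, h⟫ := hC.2.2.2 h k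

lemma inner_apply_apply (hJ : IsConjugation J) (hC : IsConjugation C) (h k : H) :
    ⟪J (C h), k⟫ = ⟪h, C (J k)⟫ :=
  calc ⟪J (C h), k⟫ = ⟪J (C h), J (J k)⟫ := by rw [hJ.apply_apply]
    _ = ⟪J k, C h⟫ := hJ.inner_map_map_s4 _ _
    _ = ⟪C (C (J k)), C h⟫ := by rw [hC.apply_apply]
    _ = ⟪h, C (J k)⟫ := hC.inner_map_map_s4 _ _

lemma comp_linearMap (hJ : IsConjugation J) (U : H →ₗ[ℂ] H)
    (hU : ∀ h k : H, ⟪U h, U k⟫ = ⟪h, k⟫) (hJU : ∀ h : H, J (U (J (U h))) = h) :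
    IsConjugation (J ∘ U) := by
  obtain ⟨hJ_add, hJ_smul, -, hJ_inner⟩ := hJ
  refine ⟨fun x y => ?_, fun a x => ?_, hJU, fun h k => ?_⟩ <;>
    simp only [Function.comp_apply, map_add, map_smul, hJ_add, hJ_smul, hJ_inner, hU]

end IsConjugation

theorem unitary_eq_conjugation_comp_iff_general {H : Type*} [NormedAddCommGroup H]
    [InnerProductSpace ℂ H] [CompleteSpace H] (U : H →L[ℂ] H)
    (hU_inner : ∀ h k : H, ⟪U h, U k⟫ = ⟪h, k⟫)
    (J : H → H) (hJ : IsConjugation J) :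
    (∃ C : H → H, IsConjugation C ∧ ∀ h : H, U h = J (C h)) ↔
      (∀ h : H, J (U (J h)) = ContinuousLinearMap.adjoint U h) := by
  constructor
  · rintro ⟨C, hC, hUC⟩ h
    have hU_adjoint : ∀ h : H, ContinuousLinearMap.adjoint U h = C (J h) := fun h =>
      ext_inner_right ℂ fun k => by
        rw [ContinuousLinearMap.adjoint_inner_left, hUC, hC.inner_apply_apply hJ]
    rw [hU_adjoint, hUC, hJ.apply_apply]
  · intro hJUJ
    have hUU : ∀ h : H, ContinuousLinearMap.adjoint U (U h) = h :=
      ContinuousLinearMap.ext_iff.mp (U.inner_map_map_iff_adjoint_comp_self.mp hU_inner)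
    refine ⟨J ∘ U, hJ.comp_linearMap U hU_inner fun h => ?_, fun h => ?_⟩
    · simp only [ContinuousLinearMap.coe_coe, hJUJ, hUU]
    · simp only [Function.comp_apply, hJ.apply_apply]

/-- For a unitary `U` and a conjugation `J`, `U = JC` for some conjugation `C`
iff `JUJ = U*`. -/
theorem unitary_eq_conjugation_comp_iff {H : Type*} [NormedAddCommGroup H]
    [InnerProductSpace ℂ H] [CompleteSpace H] (U : H →L[ℂ] H)
    (hU_inner : ∀ h k : H, ⟪U h, U k⟫ = ⟪h, k⟫) (hU_surj : Function.Surjective U)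
    (J : H → H) (hJ : IsConjugation J) :
    (∃ C : H → H, IsConjugation C ∧ ∀ h : H, U h = J (C h)) ↔
      (∀ h : H, J (U (J h)) = ContinuousLinearMap.adjoint U h) :=
  unitary_eq_conjugation_comp_iff_general U hU_inner J hJ
end

section
/- Let N ∈ B(H) be a normal operator. If there exists an anti-unitary operator V on H (a conjugate-linear surjective isometry) with VNV⁻¹ = -N*, then there exists a unitary operator U ∈ B(H) with UNU* = -N. (One may use that every normal operator N admits a conjugation J with JNJ = N*.) -/
/-!
An anti-unitary `V` conjugates every operator `A` to an operator whose adjoint is the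
`V`-conjugate of `A*`, so `VNV⁻¹ = -N*` gives `VN*V⁻¹ = -N`. The product `U = VJ` of two
anti-unitaries is a (linear) unitary, and `UNU* = V(JNJ)V⁻¹ = VN*V⁻¹ = -N`.
-/

open scoped ComplexInnerProductSpace

/-- An anti-unitary operator: a conjugate-linear surjective isometry. -/
def IsAntiUnitary {H : Type*} [NormedAddCommGroup H] [InnerProductSpace ℂ H]
    (V : H → H) : Prop :=
  (∀ x y : H, V (x + y) = V x + V y) ∧
  (∀ (a : ℂ) (x : H), V (a • x) = (starRingEnd ℂ) a • V x) ∧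
  Function.Surjective V ∧
  (∀ x : H, ‖V x‖ = ‖x‖)

namespace IsAntiUnitary

variable {H : Type*} [NormedAddCommGroup H] [InnerProductSpace ℂ H] {V : H → H}

noncomputable def toLinearIsometryEquiv (hV : IsAntiUnitary V) : H ≃ₗᵢ⋆[ℂ] H :=
  LinearIsometryEquiv.ofSurjective
    { toFun := V
      map_add' := hV.1
      map_smul' := hV.2.1
      norm_map' := hV.2.2.2 } hV.2.2.1

@[simp]
theorem coe_toLinearIsometryEquiv (hV : IsAntiUnitary V) : ⇑hV.toLinearIsometryEquiv = V :=
  rfl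

theorem re_inner_map_map (hV : IsAntiUnitary V) (x y : H) :
    (⟪V x, V y⟫).re = (⟪x, y⟫).re := by
  simp only [← RCLike.re_to_complex,
    re_inner_eq_norm_add_mul_self_sub_norm_mul_self_sub_norm_mul_self_div_two, ← hV.1,
    hV.2.2.2]

theorem inner_map_map (hV : IsAntiUnitary V) (x y : H) : ⟪V x, V y⟫ = ⟪y, x⟫ := by
  have him : (⟪V x, V y⟫).im = -(⟪x, y⟫).im := by
    have h := hV.re_inner_map_map (Complex.I • x) y
    simp only [hV.2.1, inner_smul_left, Complex.conj_I, map_neg, Complex.mul_re,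
      Complex.neg_re, Complex.neg_im, Complex.I_re, Complex.I_im] at h
    linarith
  rw [← inner_conj_symm y x]
  exact Complex.ext (by rw [hV.re_inner_map_map, Complex.conj_re])
    (by rw [him, Complex.conj_im])

theorem map_adjoint_apply [CompleteSpace H] (hV : IsAntiUnitary V) {A B : H →L[ℂ] H}
    (hAB : ∀ h, V (A h) = B (V h)) (h : H) :
    V (ContinuousLinearMap.adjoint A h) = ContinuousLinearMap.adjoint B (V h) := by
  refine ext_inner_right ℂ fun y => ?_
  obtain ⟨w, rfl⟩ := hV.2.2.1 y
  calc ⟪V (ContinuousLinearMap.adjoint A h), V w⟫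
      = ⟪w, ContinuousLinearMap.adjoint A h⟫ := hV.inner_map_map _ _
    _ = ⟪A w, h⟫ := ContinuousLinearMap.adjoint_inner_right A w h
    _ = ⟪V h, B (V w)⟫ := by rw [← hAB, hV.inner_map_map]
    _ = ⟪ContinuousLinearMap.adjoint B (V h), V w⟫ :=
      (ContinuousLinearMap.adjoint_inner_left B (V w) (V h)).symm

end IsAntiUnitary

theorem IsConjugation.isAntiUnitary {H : Type*} [NormedAddCommGroup H] [InnerProductSpace ℂ H]
    {J : H → H} (hJ : IsConjugation J) : IsAntiUnitary J := by
  obtain ⟨hadd, hsmul, hinv, hinner⟩ := hJ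
  refine ⟨hadd, hsmul, fun x => ⟨J x, hinv x⟩, fun x => ?_⟩
  rw [@norm_eq_sqrt_re_inner ℂ, @norm_eq_sqrt_re_inner ℂ H _ _ _ x, hinner]

theorem antiunitary_skew_implies_unitary_anticommute_general {H : Type*} [NormedAddCommGroup H]
    [InnerProductSpace ℂ H] [CompleteSpace H] (N : H →L[ℂ] H)
    (hGP : ∃ J : H → H, IsConjugation J ∧
      ∀ h : H, J (N (J h)) = ContinuousLinearMap.adjoint N h)
    (V : H → H) (hV : IsAntiUnitary V)
    (hVN : ∀ h : H, V (N h) = -(ContinuousLinearMap.adjoint N (V h))) :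
    ∃ U : H ≃ₗᵢ[ℂ] H, ∀ h : H, U (N h) = -(N (U h)) := by
  obtain ⟨J, hJ, hJNJ⟩ := hGP
  have hJN : ∀ h, J (N h) = ContinuousLinearMap.adjoint N (J h) := fun h => by
    simpa only [hJ.2.2.1] using hJNJ (J h)
  have hVNadj : ∀ h, V (ContinuousLinearMap.adjoint N h) = -(N (V h)) := fun h => by
    simpa only [map_neg, ContinuousLinearMap.adjoint_adjoint, neg_apply]
      using hV.map_adjoint_apply (B := -ContinuousLinearMap.adjoint N) hVN h
  refine ⟨hJ.isAntiUnitary.toLinearIsometryEquiv.trans hV.toLinearIsometryEquiv, fun h => ?_⟩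
  simp only [LinearIsometryEquiv.trans_apply, IsAntiUnitary.coe_toLinearIsometryEquiv, hJN,
    hVNadj]

/-- If a normal operator `N` satisfies `VNV⁻¹ = -N*` for some anti-unitary `V`,
then there exists a unitary `U` with `UNU* = -N` (equivalently `UN = -NU`).
One may use that every normal operator admits a conjugation `J` with `JNJ = N*`. -/
theorem antiunitary_skew_implies_unitary_anticommute {H : Type*} [NormedAddCommGroup H]
    [InnerProductSpace ℂ H] [CompleteSpace H] (N : H →L[ℂ] H)
    (hN : N ∘L ContinuousLinearMap.adjoint N = ContinuousLinearMap.adjoint N ∘L N)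
    (hGP : ∃ J : H → H, IsConjugation J ∧
      ∀ h : H, J (N (J h)) = ContinuousLinearMap.adjoint N h)
    (V : H → H) (hV : IsAntiUnitary V)
    (hVN : ∀ h : H, V (N h) = -(ContinuousLinearMap.adjoint N (V h))) :
    ∃ U : H ≃ₗᵢ[ℂ] H, ∀ h : H, U (N h) = -(N (U h)) :=
  antiunitary_skew_implies_unitary_anticommute_general N hGP V hV hVN
end

section
/- Let M be a closed subspace of a Hilbert space H that is hyperinvariant for a bounded normal operator N (i.e., M is invariant under every bounded operator commuting with N). Then for every conjugation C on H satisfying CNC = N*, one has CM ⊆ M. (Hint: P_M = E_N(Δ) for some Borel set Δ by Radjavi–Rosenthal, and C commutes with every spectral projection of N.) -/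
/-!
It suffices to find, for each `m ∈ M`, an operator `A` commuting with `N` such that `A m = C m`.
Let `𝒜` be the unital *-algebra generated by `N`; it is commutative, so its elements are normal.
From `CNC = N*` one gets `C T* = T C` for every `T ∈ 𝒜`, hence
`‖T (C m)‖ = ‖T* m‖ = ‖T m‖`. Therefore `T m ↦ T (C m)` is a well-defined isometry on the orbit
`𝒜 m`; it extends to the closure `Z` of the orbit and intertwines the action of `𝒜`. Since `Z` is
invariant under `𝒜 = 𝒜*`, the orthogonal projection onto `Z` commutes with `𝒜`, and composing the
two gives `A`. No spectral theorem is needed.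
-/

open scoped ComplexInnerProductSpace

noncomputable section

open ContinuousLinearMap Module.End

section Inclusion

variable {𝕜 E : Type*} [NormedField 𝕜] [SeminormedAddCommGroup E] [NormedSpace 𝕜 E]

def Submodule.inclusionTopologicalClosure (W : Submodule 𝕜 E) :
    W →L[𝕜] W.topologicalClosure :=
  W.subtypeL.codRestrict _ fun w ↦ W.le_topologicalClosure w.2

theorem Submodule.denseRange_inclusionTopologicalClosure (W : Submodule 𝕜 E) :
    DenseRange W.inclusionTopologicalClosure :=
  (denseRange_inclusion_iff W.le_topologicalClosure).mpr subset_rfl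

theorem Submodule.isometry_inclusionTopologicalClosure (W : Submodule 𝕜 E) :
    Isometry W.inclusionTopologicalClosure :=
  fun _ _ ↦ rfl

end Inclusion

variable {𝕜 E : Type*} [RCLike 𝕜] [NormedAddCommGroup E] [InnerProductSpace 𝕜 E] [CompleteSpace E]

theorem Submodule.commute_starProjection_of_mem_invtSubmodule {U : Submodule 𝕜 E}
    [U.HasOrthogonalProjection] {T : E →L[𝕜] E} (hT : U ∈ invtSubmodule T.toLinearMap)
    (hT' : U ∈ invtSubmodule (adjoint T).toLinearMap) :
    Commute U.starProjection T :=
  U.isIdempotentElem_starProjection.commute_iff.mpr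
    ⟨by simpa using hT, by simpa using orthogonal_mem_invtSubmodule hT'⟩

namespace StarSubalgebra

variable (𝒜 : StarSubalgebra 𝕜 (E →L[𝕜] E))

@[simps]
def evalAt (u : E) : 𝒜 →ₗ[𝕜] E where
  toFun T := (T : E →L[𝕜] E) u
  map_add' _ _ := rfl
  map_smul' _ _ := rfl

def cyclicSubspace (u : E) : Submodule 𝕜 E :=
  (LinearMap.range (𝒜.evalAt u)).topologicalClosure

instance (u : E) : (𝒜.cyclicSubspace u).HasOrthogonalProjection := by
  unfold cyclicSubspace; infer_instance

variable {𝒜}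

theorem range_evalAt_mem_invtSubmodule (u : E) {S : E →L[𝕜] E} (hS : S ∈ 𝒜) :
    LinearMap.range (𝒜.evalAt u) ∈ invtSubmodule S.toLinearMap := by
  rw [mem_invtSubmodule_iff_forall_mem_of_mem]
  rintro _ ⟨T, rfl⟩
  exact ⟨⟨S, hS⟩ * T, rfl⟩

theorem cyclicSubspace_mem_invtSubmodule (u : E) {S : E →L[𝕜] E} (hS : S ∈ 𝒜) :
    𝒜.cyclicSubspace u ∈ invtSubmodule S.toLinearMap :=
  Submodule.topologicalClosure_mem_invtSubmodule (range_evalAt_mem_invtSubmodule u hS)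

theorem commute_starProjection_cyclicSubspace (u : E) {S : E →L[𝕜] E} (hS : S ∈ 𝒜) :
    Commute (𝒜.cyclicSubspace u).starProjection S :=
  Submodule.commute_starProjection_of_mem_invtSubmodule (cyclicSubspace_mem_invtSubmodule u hS)
    (cyclicSubspace_mem_invtSubmodule u (star_mem hS))

theorem ker_evalAt_le_of_norm_apply_eq {u v : E} (h : ∀ T ∈ 𝒜, ‖T u‖ = ‖T v‖) :
    LinearMap.ker (𝒜.evalAt u) ≤ LinearMap.ker (𝒜.evalAt v) := by
  intro T hT
  rw [LinearMap.mem_ker, evalAt_apply] at hT ⊢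
  rw [← norm_eq_zero, ← h T T.2, hT, norm_zero]

def orbitMap {u v : E} (h : ∀ T ∈ 𝒜, ‖T u‖ = ‖T v‖) :
    LinearMap.range (𝒜.evalAt u) →ₗ[𝕜] E :=
  (LinearMap.ker (𝒜.evalAt u)).liftQ (𝒜.evalAt v) (ker_evalAt_le_of_norm_apply_eq h) ∘ₗ
    (𝒜.evalAt u).quotKerEquivRange.symm.toLinearMap

theorem orbitMap_apply {u v : E} (h : ∀ T ∈ 𝒜, ‖T u‖ = ‖T v‖) (T : 𝒜) :
    orbitMap h ⟨𝒜.evalAt u T, LinearMap.mem_range_self _ T⟩ = 𝒜.evalAt v T := by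
  rw [orbitMap, LinearMap.comp_apply, LinearEquiv.coe_coe,
    LinearMap.quotKerEquivRange_symm_apply_image, Submodule.mkQ_apply, Submodule.liftQ_apply]

def orbitIsometry {u v : E} (h : ∀ T ∈ 𝒜, ‖T u‖ = ‖T v‖) :
    LinearMap.range (𝒜.evalAt u) →ₗᵢ[𝕜] E where
  toLinearMap := orbitMap h
  norm_map' := by
    rintro ⟨_, T, rfl⟩
    exact (congrArg norm (orbitMap_apply h T)).trans (h T T.2).symm

def cyclicIntertwiner {u v : E} (h : ∀ T ∈ 𝒜, ‖T u‖ = ‖T v‖) :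
    𝒜.cyclicSubspace u →L[𝕜] E :=
  (orbitIsometry h).toContinuousLinearMap.extend
    (LinearMap.range (𝒜.evalAt u)).inclusionTopologicalClosure

theorem cyclicIntertwiner_apply_evalAt {u v : E} (h : ∀ T ∈ 𝒜, ‖T u‖ = ‖T v‖) (T : 𝒜) :
    cyclicIntertwiner h ((LinearMap.range (𝒜.evalAt u)).inclusionTopologicalClosure
      ⟨𝒜.evalAt u T, LinearMap.mem_range_self _ T⟩) = 𝒜.evalAt v T :=
  (extend_eq _ (Submodule.denseRange_inclusionTopologicalClosure _)
    (Submodule.isometry_inclusionTopologicalClosure _).isUniformInducing _).trans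
      (orbitMap_apply h T)

theorem cyclicIntertwiner_comp_restrict {u v : E} (h : ∀ T ∈ 𝒜, ‖T u‖ = ‖T v‖) {S : E →L[𝕜] E}
    (hS : S ∈ 𝒜) :
    cyclicIntertwiner h ∘L S.restrict
        ((mem_invtSubmodule_iff_forall_mem_of_mem _).mp (cyclicSubspace_mem_invtSubmodule u hS)) =
      S ∘L cyclicIntertwiner h := by
  apply coeFn_injective
  apply (Submodule.denseRange_inclusionTopologicalClosure _).equalizer (map_continuous _)
    (map_continuous _)
  ext ⟨_, T, rfl⟩
  exact (cyclicIntertwiner_apply_evalAt h (⟨S, hS⟩ * T)).trans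
    (congrArg S (cyclicIntertwiner_apply_evalAt h T).symm)

theorem exists_commute_apply_eq_of_norm_apply_eq {u v : E} (h : ∀ T ∈ 𝒜, ‖T u‖ = ‖T v‖) :
    ∃ A : E →L[𝕜] E, (∀ S ∈ 𝒜, Commute A S) ∧ A u = v := by
  set Z := 𝒜.cyclicSubspace u
  refine ⟨cyclicIntertwiner h ∘L Z.orthogonalProjectionOnto, fun S hS ↦ ?_, ?_⟩
  · ext z
    have hP : Z.orthogonalProjectionOnto (S z) = S.restrict
        ((mem_invtSubmodule_iff_forall_mem_of_mem _).mp (cyclicSubspace_mem_invtSubmodule u hS))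
          (Z.orthogonalProjectionOnto z) :=
      Subtype.ext congr($((commute_starProjection_cyclicSubspace u hS).eq) z)
    simp only [mul_apply_eq_comp, comp_apply, hP]
    exact congr($(cyclicIntertwiner_comp_restrict h hS) (Z.orthogonalProjectionOnto z))
  · have hu : Z.orthogonalProjectionOnto u =
        (LinearMap.range (𝒜.evalAt u)).inclusionTopologicalClosure
          ⟨𝒜.evalAt u 1, LinearMap.mem_range_self _ 1⟩ :=
      Z.orthogonalProjectionOnto_mem_subspace_eq_self ⟨u, _⟩
    rw [comp_apply, hu, cyclicIntertwiner_apply_evalAt]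
    rfl

end StarSubalgebra

theorem StarAlgebra.commute_of_mem_adjoin_singleton {R A : Type*} [CommSemiring R] [StarRing R]
    [Semiring A] [StarRing A] [Algebra R A] [StarModule R A] {a x y : A} [IsStarNormal a]
    (hx : x ∈ StarAlgebra.adjoin R {a}) (hy : y ∈ StarAlgebra.adjoin R {a}) : Commute x y :=
  congrArg Subtype.val (mul_comm (⟨x, hx⟩ : StarAlgebra.adjoin R {a}) ⟨y, hy⟩)

namespace IsConjugation

variable {H : Type*} [NormedAddCommGroup H] [InnerProductSpace ℂ H] {C : H → H}

theorem norm_apply (hC : IsConjugation C) (x : H) : ‖C x‖ = ‖x‖ := by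
  rw [@norm_eq_sqrt_re_inner ℂ, @norm_eq_sqrt_re_inner ℂ, hC.2.2.2]

theorem apply_adjoint_apply_of_mem_adjoin [CompleteSpace H] (hC : IsConjugation C)
    {N : H →L[ℂ] H} [IsStarNormal N] (hCN : ∀ x, C (N (C x)) = adjoint N x)
    {T : H →L[ℂ] H} (hT : T ∈ StarAlgebra.adjoin ℂ {N}) (x : H) :
    C (adjoint T x) = T (C x) := by
  obtain ⟨hadd, hsmul, hinv, -⟩ := hC
  induction hT using StarAlgebra.adjoin_induction generalizing x with
  | mem T hT =>
    rw [Set.mem_singleton_iff.mp hT, ← hCN, hinv]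
  | algebraMap r =>
    rw [← star_eq_adjoint, ← algebraMap_star_comm]
    simp [Algebra.algebraMap_eq_smul_one, hsmul]
  | add T S _ _ hT hS =>
    rw [map_add, add_apply, hadd, hT, hS, add_apply]
  | mul T S hTmem hSmem hT hS =>
    have hcomm :=
      (StarAlgebra.commute_of_mem_adjoin_singleton (star_mem hTmem) (star_mem hSmem)).eq
    rw [← star_eq_adjoint, star_mul, ← hcomm, mul_apply_eq_comp, star_eq_adjoint,
      star_eq_adjoint, hT, hS, mul_apply_eq_comp]
  | star T _ hT =>
    have hTC := hT (C x)
    rw [hinv] at hTC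
    rw [star_eq_adjoint, adjoint_adjoint, ← hTC, hinv]

end IsConjugation

end

theorem conjugation_preserves_hyperinvariant_general {H : Type*} [NormedAddCommGroup H]
    [InnerProductSpace ℂ H] [CompleteSpace H] (N : H →L[ℂ] H)
    (hN : N ∘L ContinuousLinearMap.adjoint N = ContinuousLinearMap.adjoint N ∘L N)
    (M : Submodule ℂ H)
    (hMhyper : ∀ S : H →L[ℂ] H, S ∘L N = N ∘L S → ∀ m ∈ M, S m ∈ M)
    (C : H → H) (hC : IsConjugation C)
    (hCN : ∀ h : H, C (N (C h)) = ContinuousLinearMap.adjoint N h) :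
    ∀ m ∈ M, C m ∈ M := by
  have hNnormal : IsStarNormal N := ⟨hN.symm⟩
  intro m hm
  obtain ⟨A, hA, hAm⟩ := (StarAlgebra.adjoin ℂ {N}).exists_commute_apply_eq_of_norm_apply_eq
    (u := m) (v := C m) fun T hT ↦ by
      have hTnormal : IsStarNormal T :=
        ⟨StarAlgebra.commute_of_mem_adjoin_singleton (star_mem hT) hT⟩
      rw [← hC.apply_adjoint_apply_of_mem_adjoin hCN hT, hC.norm_apply]
      exact ContinuousLinearMap.isStarNormal_iff_norm_eq_adjoint.mp hTnormal m
  rw [← hAm]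
  exact hMhyper A (hA N (StarAlgebra.self_mem_adjoin_singleton ℂ N)).eq m hm

/-- A hyperinvariant subspace of a normal operator is invariant under every conjugation
`C` satisfying `CNC = N*`. -/
theorem conjugation_preserves_hyperinvariant {H : Type*} [NormedAddCommGroup H]
    [InnerProductSpace ℂ H] [CompleteSpace H] (N : H →L[ℂ] H)
    (hN : N ∘L ContinuousLinearMap.adjoint N = ContinuousLinearMap.adjoint N ∘L N)
    (M : Submodule ℂ H) (hMclosed : IsClosed (M : Set H))
    (hMhyper : ∀ S : H →L[ℂ] H, S ∘L N = N ∘L S → ∀ m ∈ M, S m ∈ M)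
    (C : H → H) (hC : IsConjugation C)
    (hCN : ∀ h : H, C (N (C h)) = ContinuousLinearMap.adjoint N h) :
    ∀ m ∈ M, C m ∈ M :=
  conjugation_preserves_hyperinvariant_general N hN M hMhyper C hC hCN
end

section
/- There exist a complex Hilbert space H, an operator T ∈ B(H), and a closed subspace M of H such that CM ⊆ M for every conjugation C with CTC = T*, yet M is not invariant under T (so M is not hyperinvariant for T). Concretely, take orthonormal x, y ∈ H, T = x⊗x + i(x+y)⊗(x+y), and M = span{x}. -/
open scoped ComplexInnerProductSpace

/-!
With `P = x ⊗ x` for a unit vector `x` and `T = P + i (z ⊗ z)`, the real part `(T + T*)/2` of `T`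
is `P`. A conjugation `C` with `CTC = T*` commutes with the real part of `T`, hence with `P`, so it
maps the range `span {x}` of `P` into itself. For `z = x + y` with `y ⟂ x`, however, `T x` has the
nonzero component `i ‖y‖²` along `y`, so `span {x}` is not `T`-invariant.
-/

open Complex ContinuousLinearMap InnerProductSpace Submodule
open scoped ComplexStarModule

variable {H : Type*} [NormedAddCommGroup H] [InnerProductSpace ℂ H]

theorem map_mem_span_singleton_of_commute_rankOne {C : H → H} {x : H} (hx : ‖x‖ = 1)
    (hCx : ∀ h, C (rankOne ℂ x x h) = rankOne ℂ x x (C h)) {m : H} (hm : m ∈ ℂ ∙ x) :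
    C m ∈ ℂ ∙ x := by
  obtain ⟨c, rfl⟩ := mem_span_singleton.mp hm
  have hfix : rankOne ℂ x x (c • x) = c • x := by
    simp [inner_self_eq_norm_sq_to_K, hx]
  rw [← hfix, hCx, rankOne_apply]
  exact smul_mem _ _ (mem_span_singleton_self x)

theorem rankOne_add_I_smul_rankOne_apply_notMem_span_singleton {x y : H} (hx : x ≠ 0)
    (hy : y ≠ 0) (hxy : ⟪x, y⟫ = 0) :
    (rankOne ℂ x x + I • rankOne ℂ (x + y) (x + y)) x ∉ ℂ ∙ x := by
  intro hmem
  obtain ⟨c, hc⟩ := mem_span_singleton.mp hmem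
  have hyx : ⟪y, x⟫ = 0 := by rw [← inner_conj_symm, hxy, map_zero]
  have hinner := congrArg (fun v => ⟪y, v⟫) hc
  simp [hyx, hx, hy] at hinner

variable [CompleteSpace H]

theorem realPart_rankOne_add_I_smul_rankOne (x z : H) :
    (ℜ (rankOne ℂ x x + I • rankOne ℂ z z) : H →L[ℂ] H) = rankOne ℂ x x := by
  have hsa (v : H) : IsSelfAdjoint (rankOne ℂ v v) := (isPositive_rankOne_self v).isSelfAdjoint
  rw [map_add, realPart_I_smul, (hsa z).imaginaryPart, neg_zero, add_zero, (hsa x).coe_realPart]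

namespace IsConjugation

variable {C : H → H}

theorem map_realPart_apply (hC : IsConjugation C) {T : H →L[ℂ] H}
    (hCT : ∀ h, C (T (C h)) = adjoint T h) (h : H) :
    C ((ℜ T : H →L[ℂ] H) h) = (ℜ T : H →L[ℂ] H) (C h) := by
  obtain ⟨hadd, hsmul, hinv, -⟩ := hC
  have hT : C (T h) = adjoint T (C h) := by simpa only [hinv] using hCT (C h)
  have hT' : C (adjoint T h) = T (C h) := by rw [← hCT, hinv]
  simp only [realPart_apply_coe, star_eq_adjoint, ← Complex.coe_smul, smul_apply, add_apply,
    hsmul, hadd, hT, hT', conj_ofReal, add_comm]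

theorem map_mem_span_singleton (hC : IsConjugation C) {x z : H} (hx : ‖x‖ = 1)
    (hCT : ∀ h, C ((rankOne ℂ x x + I • rankOne ℂ z z) (C h)) =
      adjoint (rankOne ℂ x x + I • rankOne ℂ z z) h)
    {m : H} (hm : m ∈ ℂ ∙ x) : C m ∈ ℂ ∙ x :=
  map_mem_span_singleton_of_commute_rankOne hx
    (fun h => by simpa only [realPart_rankOne_add_I_smul_rankOne] using hC.map_realPart_apply hCT h)
    hm

end IsConjugation

/-- There exist an operator `T` on a complex Hilbert space and a closed subspace `M`
which is invariant under every conjugation `C` with `CTC = T*`, yet `M` is not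
invariant under `T` itself (so `M` is not hyperinvariant for `T`). -/
theorem exists_nonhyperinvariant_conjugation_invariant :
    ∃ (T : EuclideanSpace ℂ (Fin 2) →L[ℂ] EuclideanSpace ℂ (Fin 2))
      (M : Submodule ℂ (EuclideanSpace ℂ (Fin 2))),
      IsClosed (M : Set (EuclideanSpace ℂ (Fin 2))) ∧
      (∀ C : EuclideanSpace ℂ (Fin 2) → EuclideanSpace ℂ (Fin 2),
        IsConjugation C → (∀ h, C (T (C h)) = ContinuousLinearMap.adjoint T h) →
        ∀ m ∈ M, C m ∈ M) ∧
      ¬ (∀ m ∈ M, T m ∈ M) := by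
  set x : EuclideanSpace ℂ (Fin 2) := EuclideanSpace.single 0 1
  set y : EuclideanSpace ℂ (Fin 2) := EuclideanSpace.single 1 1
  have hx : ‖x‖ = 1 := by simp [x]
  have hy : y ≠ 0 := by simp [y]
  have hxy : ⟪x, y⟫ = 0 := by simp [x, y, EuclideanSpace.inner_single_left]
  refine ⟨rankOne ℂ x x + I • rankOne ℂ (x + y) (x + y), ℂ ∙ x,
    closed_of_finiteDimensional _, fun C hC hCT m hm => hC.map_mem_span_singleton hx hCT hm, ?_⟩
  intro hinv
  exact rankOne_add_I_smul_rankOne_apply_notMem_span_singleton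
    (ne_zero_of_norm_ne_zero (hx ▸ one_ne_zero)) hy hxy (hinv x (mem_span_singleton_self x))
end
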